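/- Let G be a discrete groupoid whose isotropy groups are all abelian, and R a commutative unital ring. Then the subalgebra of the convolution algebra A_R(G) consisting of functions supported on Iso(G) is a maximal commutative subalgebra of A_R(G). -/
import Mathlib


open CategoryTheory

/-- The set of arrows of a groupoid `C`, as a sigma type. -/
abbrev GE (C : Type*) [Groupoid C] := Σ a b : C, a ⟶ b

namespace GE

variable {C : Type*} [Groupoid C]

/-- The source unit `s(g) = g⁻¹ g` of an arrow, as an (identity) arrow. -/
def srcU (g : GE C) : GE C := ⟨g.1, g.1, 𝟙 g.1⟩

/-- The range unit `r(g) = g g⁻¹` of an arrow, as an (identity) arrow. -/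
def ranU (g : GE C) : GE C := ⟨g.2.1, g.2.1, 𝟙 g.2.1⟩

/-- The unit space `G⁽⁰⁾`, viewed as the set of identity arrows. -/
def unitSpace (C : Type*) [Groupoid C] : Set (GE C) := {g | ∃ a : C, g = ⟨a, a, 𝟙 a⟩}

/-- The isotropy bundle `Iso(G) = {g : s(g) = r(g)}`. -/
def isoSet (C : Type*) [Groupoid C] : Set (GE C) := {g | srcU g = ranU g}

/-- The product `g₁ g₂` of two composable arrows (`s(g₁) = r(g₂)`). -/
def gmul (g₁ g₂ : GE C) (h : g₂.2.1 = g₁.1) : GE C :=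
  ⟨g₂.1, g₁.2.1, g₂.2.2 ≫ eqToHom h ≫ g₁.2.2⟩

/-- Convolution of finitely supported functions on a (discrete) groupoid:
`(f * g)(x) = ∑_{x = g₁ g₂} f(g₁) g(g₂)`. -/
noncomputable def conv (R : Type*) [CommRing R] (f g : GE C → R) : GE C → R := fun x =>
  ∑ᶠ p ∈ {p : GE C × GE C | ∃ h : p.2.2.1 = p.1.1, gmul p.1 p.2 h = x}, f p.1 * g p.2

end GE

open GE Function

section Helpers
variable {C : Type*} [Groupoid C]

theorem mem_isoSet_iff (g : GE C) : g ∈ isoSet C ↔ g.1 = g.2.1 := by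
  constructor
  · intro h
    exact congrArg Sigma.fst h
  · intro h
    obtain ⟨a, b, k⟩ := g
    simp only at h
    subst h
    rfl

theorem conv_comm_of_iso (hab : ∀ (a : C) (g h : a ⟶ a), g ≫ h = h ≫ g)
    {R : Type*} [CommRing R] (f g : GE C → R)
    (hf : support f ⊆ isoSet C) (hg : support g ⊆ isoSet C) :
    conv R f g = conv R g f := by
  funext x
  unfold conv
  set S : Set (GE C × GE C) :=
    {p : GE C × GE C | ∃ h : p.2.2.1 = p.1.1, gmul p.1 p.2 h = x} with hS
  set T : Set (GE C × GE C) := S ∩ (isoSet C ×ˢ isoSet C) with hT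
  have step1 : ∑ᶠ p ∈ S, f p.1 * g p.2 = ∑ᶠ p ∈ T, f p.1 * g p.2 := by
    apply finsum_mem_inter_support_eq'
    intro p hp
    have h1 : p.1 ∈ isoSet C := hf (fun h0 => hp (by simp [h0]))
    have h2 : p.2 ∈ isoSet C := hg (fun h0 => hp (by simp [h0]))
    simp [hT, h1, h2]
  have step2 : ∑ᶠ p ∈ S, g p.1 * f p.2 = ∑ᶠ p ∈ T, g p.1 * f p.2 := by
    apply finsum_mem_inter_support_eq'
    intro p hp
    have h1 : p.1 ∈ isoSet C := hg (fun h0 => hp (by simp [h0]))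
    have h2 : p.2 ∈ isoSet C := hf (fun h0 => hp (by simp [h0]))
    simp [hT, h1, h2]
  rw [step1, step2]
  have hmaps : Set.MapsTo Prod.swap T T := by
    rintro ⟨⟨a1, a2, k1⟩, b1, b2, k2⟩ ⟨⟨hc, hm⟩, hi1, hi2⟩
    have e1 : a1 = a2 := (mem_isoSet_iff _).mp hi1
    have e2 : b1 = b2 := (mem_isoSet_iff _).mp hi2
    subst e1; subst e2
    simp only at hc
    subst hc
    refine ⟨⟨rfl, ?_⟩, hi2, hi1⟩
    simpa [gmul, hab] using hm
  have hbij : Set.BijOn Prod.swap T T :=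
    ⟨hmaps, Prod.swap_injective.injOn, fun p hp => ⟨Prod.swap p, hmaps hp, Prod.swap_swap p⟩⟩
  exact finsum_mem_eq_of_bijOn Prod.swap hbij (fun p _ => mul_comm (f p.1) (g p.2))

end Helpers
section Delta
variable {C : Type*} [Groupoid C] {R : Type*} [CommRing R]

open Classical in
/-- Indicator of the unit at `a`. -/
noncomputable def udelta (R : Type*) [CommRing R] (a : C) : GE C → R :=
  fun y => if y = (⟨a, a, 𝟙 a⟩ : GE C) then 1 else 0

theorem udelta_support (a : C) :
    Function.support (udelta R a) ⊆ {(⟨a, a, 𝟙 a⟩ : GE C)} := by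
  intro y hy
  by_contra hne
  simp only [Set.mem_singleton_iff] at hne
  simp [udelta, hne] at hy

theorem conv_udelta_right (f : GE C → R) (x1 x2 : C) (xm : x1 ⟶ x2) :
    conv R f (udelta R x1) ⟨x1, x2, xm⟩ = f ⟨x1, x2, xm⟩ := by
  unfold conv
  rw [finsum_mem_def]
  have key := finsum_eq_single
    (Set.indicator {p : GE C × GE C | ∃ h : p.2.2.1 = p.1.1, gmul p.1 p.2 h = ⟨x1, x2, xm⟩}
      fun p => f p.1 * udelta R x1 p.2)
    ((⟨x1, x2, xm⟩ : GE C), (⟨x1, x1, 𝟙 x1⟩ : GE C)) ?_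
  · rw [key]
    have hmem : ((⟨x1, x2, xm⟩ : GE C), (⟨x1, x1, 𝟙 x1⟩ : GE C)) ∈
        {p : GE C × GE C | ∃ h : p.2.2.1 = p.1.1, gmul p.1 p.2 h = ⟨x1, x2, xm⟩} := by
      refine ⟨rfl, ?_⟩
      simp [gmul]
    rw [Set.indicator_of_mem hmem]
    simp [udelta]
  · rintro ⟨⟨b1, b2, k⟩, p2⟩ hp
    by_cases hS : ((⟨b1, b2, k⟩ : GE C), p2) ∈
        {p : GE C × GE C | ∃ h : p.2.2.1 = p.1.1, gmul p.1 p.2 h = ⟨x1, x2, xm⟩}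
    · rw [Set.indicator_of_mem hS]
      by_cases hd : p2 = (⟨x1, x1, 𝟙 x1⟩ : GE C)
      · subst hd
        obtain ⟨hc, hm⟩ := hS
        simp only at hc
        subst hc
        exfalso
        apply hp
        simp only [gmul, eqToHom_refl, Category.id_comp] at hm
        obtain ⟨-, hm2⟩ := Sigma.mk.inj_iff.mp hm
        obtain ⟨rfl, hm3⟩ := Sigma.mk.inj_iff.mp (eq_of_heq hm2)
        rw [eq_of_heq hm3]
      · simp [udelta, hd]
    · rw [Set.indicator_of_notMem hS]

theorem conv_udelta_left (f : GE C → R) (a : C) (x : GE C) (hx : x.2.1 ≠ a) :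
    conv R (udelta R a) f x = 0 := by
  unfold conv
  apply finsum_mem_of_eqOn_zero
  rintro ⟨p1, p2⟩ ⟨hc, hm⟩
  by_cases hd : p1 = (⟨a, a, 𝟙 a⟩ : GE C)
  · exfalso
    apply hx
    subst hd
    have := congrArg (fun z : GE C => z.2.1) hm
    simpa [gmul] using this.symm
  · simp [udelta, hd]

end Delta
/-- For a discrete groupoid with abelian isotropy groups, the functions supported on
`Iso(G)` form a maximal commutative subalgebra of the convolution algebra: it is
commutative and equals its own centraliser. -/
theorem iso_supported_maximal_commutative {C : Type*} [Groupoid C]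
    (hab : ∀ (a : C) (g h : a ⟶ a), g ≫ h = h ≫ g)
    (R : Type*) [CommRing R] :
    (∀ f ∈ {f : GE C → R | (Function.support f).Finite ∧
          Function.support f ⊆ GE.isoSet C},
      ∀ g ∈ {f : GE C → R | (Function.support f).Finite ∧
          Function.support f ⊆ GE.isoSet C},
        GE.conv R f g = GE.conv R g f) ∧
      {f : GE C → R | (Function.support f).Finite ∧
          ∀ g ∈ {f : GE C → R | (Function.support f).Finite ∧
            Function.support f ⊆ GE.isoSet C}, GE.conv R f g = GE.conv R g f} =
        {f : GE C → R | (Function.support f).Finite ∧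
          Function.support f ⊆ GE.isoSet C} := by

  constructor
  · rintro f ⟨hffin, hfsupp⟩ g ⟨hgfin, hgsupp⟩
    exact conv_comm_of_iso hab f g hfsupp hgsupp
  · ext f
    simp only [Set.mem_setOf_eq]
    constructor
    · rintro ⟨hfin, hcomm⟩
      refine ⟨hfin, ?_⟩
      intro x hx
      rw [mem_isoSet_iff]
      by_contra hne
      obtain ⟨x1, x2, xm⟩ := x
      simp only at hne
      have hgmem : udelta R x1 ∈ {f : GE C → R | (Function.support f).Finite ∧
          Function.support f ⊆ GE.isoSet C} := by
        refine ⟨Set.Finite.subset (Set.finite_singleton _) (udelta_support x1), ?_⟩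
        exact (udelta_support x1).trans
          (Set.singleton_subset_iff.mpr ((mem_isoSet_iff _).mpr rfl))
      have hcv := hcomm (udelta R x1) hgmem
      have h1 := conv_udelta_right f x1 x2 xm
      have h2 := conv_udelta_left f x1 (⟨x1, x2, xm⟩ : GE C) (fun h => hne h.symm)
      apply hx
      rw [← h1, congrFun hcv (⟨x1, x2, xm⟩ : GE C), h2]
    · rintro ⟨hfin, hsupp⟩
      exact ⟨hfin, fun g hg => conv_comm_of_iso hab f g hsupp hg.2⟩
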